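/- Let J satisfy (K1). Assume 0 < r⁻ < 1 and select γ⁻ ∈ (0,1) such that γ⁻·ln(e/γ⁻) < 1 − r⁻. Define M(t) := ⌊γ⁻ t⌋ and N(t) := ⌊3t⌋ + 1. Then e^{−t}·∑_{i=1}^∞ (t^i/i!)·R_i((1−m)L) − e^{−t}·∑_{i=M(t)}^{N(t)} (t^i/i!)·R_i((1−m)L) = o(e^{−r⁻ t}) as t → ∞, uniformly with respect to m ∈ (0,1) and L > 0; that is, sup_{m∈(0,1), L>0} e^{r⁻ t}·|e^{−t}·∑_{i∉[M(t),N(t)]} (t^i/i!)·R_i((1−m)L)| → 0 as t → ∞. -/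

import Mathlib

open MeasureTheory Filter Set Asymptotics

noncomputable section

/-- `convIter J n` is the (n+1)-fold convolution `J^{*(n+1)}` of `J` with itself:
`convIter J 0 = J` and `convIter J (n+1) = J ∗ convIter J n`. -/
def convIter (J : ℝ → ℝ) : ℕ → ℝ → ℝ
  | 0 => J
  | n + 1 => fun x => ∫ y, J y * convIter J n (x - y)

/-- `tailR J n L = R_{n+1}(L) = ∫_{|x| ≥ L} J^{*(n+1)}(x) dx`, the tail of the
`(n+1)`-fold convolution of `J`. -/
def tailR (J : ℝ → ℝ) (n : ℕ) (L : ℝ) : ℝ :=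
  ∫ x in {x : ℝ | L ≤ |x|}, convIter J n x

/-- The step initial datum `φ(x) = h · 1_{(-L,L)}(x)`. -/
def stepInit (h L : ℝ) : ℝ → ℝ :=
  Set.indicator (Set.Ioo (-L) L) (fun _ => h)

/-- Assumption (K1): `J` is nonnegative, even, integrable, of total mass 1. -/
def K1 (J : ℝ → ℝ) : Prop :=
  (∀ x, 0 ≤ J x) ∧ (∀ x, J (-x) = J x) ∧ Integrable J ∧ (∫ x, J x) = 1

/-- `u` is a bounded solution of `∂ₜ u = ∫ J(y)(u(t,x-y) - u(t,x)) dy + f(u)` for `t > 0`,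
with initial datum `u0`. -/
def IsBddSol (J f : ℝ → ℝ) (u0 : ℝ → ℝ) (u : ℝ → ℝ → ℝ) : Prop :=
  (∃ M, ∀ t x, 0 ≤ t → |u t x| ≤ M) ∧
  (∀ t, 0 ≤ t → Measurable fun x => u t x) ∧
  (∀ x, ContinuousOn (fun t => u t x) (Set.Ici 0)) ∧
  (∀ x, u 0 x = u0 x) ∧
  (∀ t x, 0 < t → HasDerivAt (fun s => u s x)
    ((∫ y, J y * (u t (x - y) - u t x)) + f (u t x)) t)

/-- Extinction at large times: `sup_x u(t,x) → 0` as `t → ∞`. -/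
def Extinct (u : ℝ → ℝ → ℝ) : Prop :=
  Tendsto (fun t => ⨆ x, u t x) atTop (nhds 0)

/-- Propagation: `u(t,x) → 1` as `t → ∞`, locally uniformly in `x`. -/
def Propagates (u : ℝ → ℝ → ℝ) : Prop :=
  TendstoLocallyUniformly (fun t x => u t x) (fun _ => (1 : ℝ)) atTop

/-- Assumption (F): `f` is Lipschitz, vanishes at `0, θ, 1`, positive on `(θ,1)`,
bistable (with positive integral) or ignition, and `f(u) ≥ rm (u - θ)` on `[0, δ]`. -/
def AssumptionF (f : ℝ → ℝ) (θ rm δ : ℝ) : Prop :=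
  (∃ C : ℝ, 0 ≤ C ∧ ∀ u v : ℝ, |f u - f v| ≤ C * |u - v|) ∧
  f 0 = 0 ∧ f θ = 0 ∧ f 1 = 0 ∧
  (∀ u ∈ Set.Ioo θ 1, 0 < f u) ∧
  (((∀ u ∈ Set.Ioo 0 θ, f u < 0) ∧ 0 < ∫ s in (0:ℝ)..1, f s) ∨
    (∀ u ∈ Set.Ioo 0 θ, f u = 0)) ∧
  0 < rm ∧ δ ∈ Set.Ioo θ 1 ∧
  (∀ u ∈ Set.Icc 0 δ, rm * (u - θ) ≤ f u)

/-- Assumption (K3): the Fourier transform of `J` satisfies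
`Ĵ(ξ) = 1 - a |ξ|^β + o(|ξ|^β)` as `ξ → 0`. -/
def K3 (J : ℝ → ℝ) (a β : ℝ) : Prop :=
  (fun ξ : ℝ => (∫ x : ℝ, Complex.exp (-((ξ : ℂ) * (x : ℂ)) * Complex.I) * (J x : ℂ))
      - ((1 - a * |ξ| ^ β : ℝ) : ℂ))
    =o[nhds (0:ℝ)] (fun ξ : ℝ => |ξ| ^ β)

/-! Since `0 ≤ R_i ≤ 1`, the difference is at most the Poisson mass `e^{-t} ∑_{i ∉ [M, N]} tⁱ/i!`
outside the window. Both tails are controlled by a Chernoff argument: `1 ≤ γ^{i - γt}` for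
`i < γt` and `1 ≤ e^{i - 3t}` for `i > 3t`, and weighting the exponential series by these factors
gives `∑_{i<M} tⁱ/i! ≤ γ^{-γt} e^{γt} = e^{γ ln(e/γ) t}` and `∑_{i>N} tⁱ/i! ≤ e^{-3t} e^{et}`.
After multiplying by `e^{(r⁻-1)t}`, both exponents are negative by the choice of `γ⁻` and `e < 3`. -/

open Real
open scoped Nat

lemma convIter_succ_eq_convolution (J : ℝ → ℝ) (n : ℕ) :
    convIter J (n + 1) = convolution J (convIter J n) (ContinuousLinearMap.mul ℝ ℝ) volume := by
  ext x
  simp [convIter, convolution, ContinuousLinearMap.mul_apply']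

lemma convIter_nonneg {J : ℝ → ℝ} (hJ : ∀ x, 0 ≤ J x) (n : ℕ) (x : ℝ) : 0 ≤ convIter J n x := by
  induction n generalizing x with
  | zero => exact hJ x
  | succ n ih => exact integral_nonneg fun y => mul_nonneg (hJ y) (ih _)

lemma integrable_convIter {J : ℝ → ℝ} (hJ : Integrable J) (n : ℕ) : Integrable (convIter J n) := by
  induction n with
  | zero => exact hJ
  | succ n ih => rw [convIter_succ_eq_convolution]; exact hJ.integrable_convolution _ ih

lemma integral_convIter {J : ℝ → ℝ} (hJ : Integrable J) (hJ1 : ∫ x, J x = 1) (n : ℕ) :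
    ∫ x, convIter J n x = 1 := by
  induction n with
  | zero => exact hJ1
  | succ n ih =>
    rw [convIter_succ_eq_convolution, integral_convolution _ hJ (integrable_convIter hJ n)]
    simp [hJ1, ih]

lemma tailR_nonneg {J : ℝ → ℝ} (hJ : ∀ x, 0 ≤ J x) (n : ℕ) (L : ℝ) : 0 ≤ tailR J n L :=
  setIntegral_nonneg (measurableSet_le measurable_const measurable_abs) fun x _ =>
    convIter_nonneg hJ n x

lemma tailR_le_one {J : ℝ → ℝ} (hJ : ∀ x, 0 ≤ J x) (hJi : Integrable J) (hJ1 : ∫ x, J x = 1)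
    (n : ℕ) (L : ℝ) : tailR J n L ≤ 1 :=
  (setIntegral_le_integral (integrable_convIter hJi n)
    (Eventually.of_forall (convIter_nonneg hJ n))).trans_eq (integral_convIter hJi hJ1 n)

lemma hasSum_pow_div_factorial_mul_exp (t c a : ℝ) :
    HasSum (fun i : ℕ => t ^ i / i ! * exp (c * i - a)) (exp (t * exp c - a)) := by
  have h := (NormedSpace.expSeries_div_hasSum_exp (t * exp c)).mul_right (exp (-a))
  rw [← Real.exp_eq_exp_ℝ, ← exp_add, ← sub_eq_add_neg] at h
  have hterm (i : ℕ) : t ^ i / i ! * exp (c * i - a) = (t * exp c) ^ i / i ! * exp (-a) := by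
    rw [sub_eq_add_neg, exp_add, mul_comm c, exp_nat_mul, mul_pow]
    ring
  simpa only [hterm] using h

lemma tsum_succ_sub_sum_eq_tsum_indicator_compl {f : ℕ → ℝ} (hf : Summable f) {s : Finset ℕ}
    (hs : 0 ∉ s) : ∑' n, f (n + 1) - ∑ i ∈ s, f i = ∑' n, (↑s : Set ℕ)ᶜ.indicator f (n + 1) := by
  have hsplit := hf.sum_add_tsum_compl (s := s)
  rw [tsum_subtype, (hf.indicator _).tsum_eq_zero_add, hf.tsum_eq_zero_add,
    Set.indicator_of_mem (by simpa using hs)] at hsplit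
  linarith

lemma one_le_exp_add_exp_of_notMem_Icc {γ t : ℝ} (hγ : 0 < γ) (hγ1 : γ < 1) (ht : 0 ≤ t) {i : ℕ}
    (hi : i ∉ Finset.Icc ⌊γ * t⌋₊ (⌊3 * t⌋₊ + 1)) :
    1 ≤ exp (log γ * i - log γ * (γ * t)) + exp (i - 3 * t) := by
  rw [Finset.mem_Icc, not_and_or, not_le, not_le] at hi
  rcases hi with hlow | hhigh
  · have hi : (i : ℝ) < γ * t := Nat.lt_of_lt_floor hlow
    have : 0 ≤ log γ * i - log γ * (γ * t) := by nlinarith [log_neg hγ hγ1]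
    linarith [one_le_exp this, exp_pos ((i : ℝ) - 3 * t)]
  · have hi : 3 * t < i := (Nat.floor_lt (by positivity)).mp (by omega)
    have : 0 ≤ (i : ℝ) - 3 * t := by linarith
    linarith [one_le_exp this, exp_pos (log γ * i - log γ * (γ * t))]

lemma tsum_indicator_compl_Icc_le {γ t : ℝ} (hγ : 0 < γ) (hγ1 : γ < 1) (ht : 0 ≤ t)
    {w : ℕ → ℝ} (hw0 : ∀ i, 0 ≤ w i) (hw1 : ∀ i, w i ≤ 1) :
    ∑' i, (↑(Finset.Icc ⌊γ * t⌋₊ (⌊3 * t⌋₊ + 1)) : Set ℕ)ᶜ.indicator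
        (fun i => t ^ i / i ! * w i) i ≤
      exp (t * (γ * log (exp 1 / γ))) + exp (t * (exp 1 - 3)) := by
  have hlow := hasSum_pow_div_factorial_mul_exp t (log γ) (log γ * (γ * t))
  have hhigh := hasSum_pow_div_factorial_mul_exp t 1 (3 * t)
  rw [exp_log hγ] at hlow
  simp only [one_mul] at hhigh
  set s : Set ℕ := ↑(Finset.Icc ⌊γ * t⌋₊ (⌊3 * t⌋₊ + 1))
  have hbound (i : ℕ) : sᶜ.indicator (fun i => t ^ i / i ! * w i) i ≤
      t ^ i / i ! * exp (log γ * i - log γ * (γ * t)) + t ^ i / i ! * exp (i - 3 * t) := by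
    rw [← mul_add]
    by_cases hi : i ∈ s
    · rw [Set.indicator_of_notMem (Set.notMem_compl_iff.mpr hi)]
      positivity
    · rw [Set.indicator_of_mem hi]
      refine mul_le_mul_of_nonneg_left ((hw1 i).trans ?_) (by positivity)
      exact one_le_exp_add_exp_of_notMem_Icc hγ hγ1 ht (by simpa [s] using hi)
  have hsum : Summable fun i => sᶜ.indicator (fun i => t ^ i / i ! * w i) i :=
    (hlow.add hhigh).summable.of_nonneg_of_le
      (fun i => Set.indicator_nonneg (fun i _ => mul_nonneg (by positivity) (hw0 i)) i) hbound
  refine (hasSum_le hbound hsum.hasSum (hlow.add hhigh)).trans_eq ?_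
  rw [log_div (exp_pos 1).ne' hγ.ne', log_exp]
  congr 2 <;> ring

lemma tsum_succ_sub_sum_Icc_mem_Icc {γ t : ℝ} (hγ : 0 < γ) (hγ1 : γ < 1) (hγt : 1 ≤ γ * t)
    {w : ℕ → ℝ} (hw0 : ∀ i, 0 ≤ w i) (hw1 : ∀ i, w i ≤ 1) :
    ∑' n : ℕ, t ^ (n + 1) / (n + 1)! * w (n + 1) -
        ∑ i ∈ Finset.Icc ⌊γ * t⌋₊ (⌊3 * t⌋₊ + 1), t ^ i / i ! * w i ∈
      Set.Icc 0 (exp (t * (γ * log (exp 1 / γ))) + exp (t * (exp 1 - 3))) := by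
  have ht : 0 ≤ t := nonneg_of_mul_nonneg_right (by linarith) hγ
  set f : ℕ → ℝ := fun i => t ^ i / i ! * w i
  set s : Set ℕ := ↑(Finset.Icc ⌊γ * t⌋₊ (⌊3 * t⌋₊ + 1))
  have hf0 (i : ℕ) : 0 ≤ f i := mul_nonneg (by positivity) (hw0 i)
  have hf : Summable f := (Real.summable_pow_div_factorial t).of_nonneg_of_le hf0
    fun i => mul_le_of_le_one_right (by positivity) (hw1 i)
  have hind0 (i : ℕ) : 0 ≤ sᶜ.indicator f i := Set.indicator_nonneg (fun i _ => hf0 i) i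
  have hzero : 0 ∉ Finset.Icc ⌊γ * t⌋₊ (⌊3 * t⌋₊ + 1) := by simpa using hγt
  rw [tsum_succ_sub_sum_eq_tsum_indicator_compl hf hzero]
  exact ⟨tsum_nonneg fun n => hind0 (n + 1),
    (tsum_comp_le_tsum_of_inj (hf.indicator _) hind0 Nat.succ_injective).trans
      (tsum_indicator_compl_Icc_le hγ hγ1 ht hw0 hw1)⟩

lemma tendsto_exp_mul_atTop_nhds_zero {k : ℝ} (hk : k < 0) :
    Tendsto (fun t => exp (t * k)) atTop (nhds 0) :=
  tendsto_exp_comp_nhds_zero.mpr (tendsto_id.atTop_mul_const_of_neg hk)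

theorem middle_sum_dominates_general
    (J : ℝ → ℝ) (rm γ : ℝ)
    (hK1 : K1 J) (hrm1 : rm < 1)
    (hγ : 0 < γ) (hγ1 : γ < 1)
    (hγrm : γ * Real.log (Real.exp 1 / γ) < 1 - rm) :
    ∀ δ, 0 < δ → ∃ t₀ : ℝ, ∀ t, t₀ ≤ t → ∀ m ∈ Set.Ioo (0:ℝ) 1, ∀ L, 0 < L →
      Real.exp (rm * t) *
        |Real.exp (-t) *
            (∑' n : ℕ, t ^ (n + 1) / (Nat.factorial (n + 1) : ℝ) * tailR J n ((1 - m) * L)) -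
          Real.exp (-t) *
            (∑ i ∈ Finset.Icc ⌊γ * t⌋₊ (⌊3 * t⌋₊ + 1),
              t ^ i / (Nat.factorial i : ℝ) * tailR J (i - 1) ((1 - m) * L))| ≤ δ := by
  obtain ⟨hJ0, -, hJi, hJ1⟩ := hK1
  intro δ hδ
  have hdecay : Tendsto (fun t => exp (t * (rm - 1 + γ * log (exp 1 / γ))) +
      exp (t * (rm - 1 + (exp 1 - 3)))) atTop (nhds 0) := by
    simpa using (tendsto_exp_mul_atTop_nhds_zero (by linarith)).add
      (tendsto_exp_mul_atTop_nhds_zero (by linarith [exp_one_lt_three]))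
  obtain ⟨t₀, ht₀⟩ := eventually_atTop.mp
    ((hdecay.eventually_le_const hδ).and (eventually_ge_atTop γ⁻¹))
  refine ⟨t₀, fun t ht m _ L _ => ?_⟩
  obtain ⟨hsmall, htγ⟩ := ht₀ t ht
  have hγt : 1 ≤ γ * t := by rwa [inv_le_iff_one_le_mul₀' hγ] at htγ
  obtain ⟨hdiff0, hdiff⟩ := tsum_succ_sub_sum_Icc_mem_Icc hγ hγ1 hγt
    (fun i => tailR_nonneg hJ0 (i - 1) ((1 - m) * L)) (fun i => tailR_le_one hJ0 hJi hJ1 _ _)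
  simp only [Nat.add_sub_cancel] at hdiff0 hdiff
  rw [← mul_sub, abs_mul, abs_of_pos (exp_pos _), abs_of_nonneg hdiff0, ← mul_assoc, ← exp_add]
  calc exp (rm * t + -t) * _ ≤ exp (rm * t + -t) *
        (exp (t * (γ * log (exp 1 / γ))) + exp (t * (exp 1 - 3))) := by gcongr
    _ = exp (t * (rm - 1 + γ * log (exp 1 / γ))) + exp (t * (rm - 1 + (exp 1 - 3))) := by
      rw [mul_add, ← exp_add, ← exp_add]
      ring_nf
    _ ≤ δ := hsmall

/-- **Lemma (Middle part of the series dominates).** Under (K1), if `0 < r⁻ < 1` and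
`γ⁻ ∈ (0,1)` satisfies `γ⁻ ln(e/γ⁻) < 1 - r⁻`, then, with `M(t) = ⌊γ⁻ t⌋` and
`N(t) = ⌊3t⌋ + 1`,
`e^{-t} ∑_{i≥1} (tⁱ/i!) R_i((1-m)L) - e^{-t} ∑_{i=M(t)}^{N(t)} (tⁱ/i!) R_i((1-m)L)
 = o(e^{-r⁻ t})` as `t → ∞`, uniformly with respect to `m ∈ (0,1)` and `L > 0`. -/
theorem middle_sum_dominates
    (J : ℝ → ℝ) (rm γ : ℝ)
    (hK1 : K1 J) (hrm : 0 < rm) (hrm1 : rm < 1)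
    (hγ : 0 < γ) (hγ1 : γ < 1)
    (hγrm : γ * Real.log (Real.exp 1 / γ) < 1 - rm) :
    ∀ δ, 0 < δ → ∃ t₀ : ℝ, ∀ t, t₀ ≤ t → ∀ m ∈ Set.Ioo (0:ℝ) 1, ∀ L, 0 < L →
      Real.exp (rm * t) *
        |Real.exp (-t) *
            (∑' n : ℕ, t ^ (n + 1) / (Nat.factorial (n + 1) : ℝ) * tailR J n ((1 - m) * L)) -
          Real.exp (-t) *
            (∑ i ∈ Finset.Icc ⌊γ * t⌋₊ (⌊3 * t⌋₊ + 1),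
              t ^ i / (Nat.factorial i : ℝ) * tailR J (i - 1) ((1 - m) * L))| ≤ δ :=
  middle_sum_dominates_general J rm γ hK1 hrm1 hγ hγ1 hγrm
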